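/- arXiv:1501.04647 — 4 statements merged into one kernel-verified Lean document; each statement's English description precedes it below -/
import Mathlib

section
/- Let T be a finite tree of order n ≥ 3 and suppose T is k-adjacency dimensional. Then k ∈ {2,3}; moreover, k = 2 if and only if T has two distinct leaves with a common neighbor (i.e., two leaves sharing a common support vertex). -/
open Finset

namespace AdjDim

noncomputable section
open Classical

variable {V W : Type*}

/-- Truncated distance `d_{G,2}(x,y) = min(d_G(x,y), 2)`:
`0` if `x = y`, `1` if `x` and `y` are adjacent, and `2` otherwise. -/
def d2 (G : SimpleGraph V) (x y : V) : ℕ :=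
  if x = y then 0 else if G.Adj x y then 1 else 2

/-- `S` is a `k`-adjacency generator for `G`: every pair of distinct vertices is
distinguished (w.r.t. `d_{G,2}`) by at least `k` vertices of `S`. -/
def IsKAdjGen (G : SimpleGraph V) [Fintype V] (k : ℕ) (S : Finset V) : Prop :=
  ∀ x y : V, x ≠ y → k ≤ (S.filter (fun w => d2 G x w ≠ d2 G y w)).card

/-- The `k`-adjacency dimension of `G`: the minimum cardinality of a
`k`-adjacency generator. -/
def adim (G : SimpleGraph V) [Fintype V] (k : ℕ) : ℕ :=
  sInf {n | ∃ S : Finset V, IsKAdjGen G k S ∧ S.card = n}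

/-- `B` is a `k`-adjacency basis of `G`: a `k`-adjacency generator of minimum
cardinality. -/
def IsKAdjBasis (G : SimpleGraph V) [Fintype V] (k : ℕ) (B : Finset V) : Prop :=
  IsKAdjGen G k B ∧ B.card = adim G k

/-- `G` is `k`-adjacency dimensional: `k` is the largest integer for which a
`k`-adjacency generator exists. -/
def IsKAdjDimensional (G : SimpleGraph V) [Fintype V] (k : ℕ) : Prop :=
  (∃ S : Finset V, IsKAdjGen G k S) ∧
    ∀ k' : ℕ, k < k' → ¬ ∃ S : Finset V, IsKAdjGen G k' S

/-- `C_G(x,y)`: the set of vertices distinguishing `x` and `y` w.r.t. `d_{G,2}`. -/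
def CSet (G : SimpleGraph V) [Fintype V] (x y : V) : Finset V :=
  univ.filter (fun z => d2 G x z ≠ d2 G y z)

/-- `C(G) = min_{x ≠ y} |C_G(x,y)|`. -/
def Cmin (G : SimpleGraph V) [Fintype V] : ℕ :=
  sInf {m | ∃ x y : V, x ≠ y ∧ (CSet G x y).card = m}

/-- `C_k(G)`: the union of the sets `C_G(x,y)` over pairs of distinct vertices
with `|C_G(x,y)| = k`. -/
def Ck (G : SimpleGraph V) [Fintype V] (k : ℕ) : Finset V :=
  univ.filter (fun z => ∃ x y : V, x ≠ y ∧ (CSet G x y).card = k ∧ z ∈ CSet G x y)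

/-- Two distinct vertices `x, y` are twins: every other vertex is at the same
truncated distance from both. -/
def Twins (G : SimpleGraph V) (x y : V) : Prop :=
  x ≠ y ∧ ∀ z : V, z ≠ x → z ≠ y → d2 G x z = d2 G y z

/-- The join `G + H` of two vertex-disjoint graphs. -/
def join (G : SimpleGraph V) (H : SimpleGraph W) : SimpleGraph (V ⊕ W) where
  Adj x y :=
    match x, y with
    | Sum.inl a, Sum.inl b => G.Adj a b
    | Sum.inr a, Sum.inr b => H.Adj a b
    | Sum.inl _, Sum.inr _ => True
    | Sum.inr _, Sum.inl _ => True
  symm := by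
    constructor
    rintro (a | a) (b | b) h
    · exact G.adj_symm h
    · trivial
    · trivial
    · exact H.adj_symm h
  loopless := by
    constructor
    rintro (a | a) h
    · exact G.irrefl h
    · exact H.irrefl h

/-- `K_1 + H`: the join of a one-vertex graph with `H`, i.e. `H` together with a
new universal vertex. -/
def K1join (H : SimpleGraph W) : SimpleGraph (Unit ⊕ W) :=
  join (⊥ : SimpleGraph Unit) H

/-!
Since `x` and `y` distinguish themselves, a `k`-adjacency generator exists iff
`k ≤ C(G) = min_{x ≠ y} |C_G(x,y)|`; hence `k = C(G) ≥ 2`, and `C(G) = 2` exactly when `G` has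
twins. In a tree of order at least three, adjacent twins would form a triangle with any vertex
adjacent to one of them, and non-adjacent twins have the same neighbours, so (no 4-cycles) a
single common one. For `C(G) ≤ 3` take a longest path `u s t ⋯`: either `s` has a second leaf
neighbour, or `deg s ≤ 2` and `C_G(u,s) ⊆ {u, s, t}`.
-/

open SimpleGraph

variable {G : SimpleGraph V} {x y z u s : V} {k : ℕ}

section TruncatedDistance

lemma d2_of_ne (h : x ≠ z) : d2 G x z = if G.Adj x z then 1 else 2 := if_neg h

lemma d2_eq_zero_iff : d2 G x y = 0 ↔ x = y := by
  unfold d2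
  split_ifs <;> simp_all

lemma d2_eq_d2_iff (hx : x ≠ z) (hy : y ≠ z) : d2 G x z = d2 G y z ↔ (G.Adj x z ↔ G.Adj y z) := by
  rw [d2_of_ne hx, d2_of_ne hy]
  split_ifs <;> simp_all

lemma twins_iff : Twins G x y ↔ x ≠ y ∧ ∀ z, z ≠ x → z ≠ y → (G.Adj x z ↔ G.Adj y z) := by
  refine and_congr_right fun _ => forall_congr' fun z => forall₂_congr fun hzx hzy => ?_
  exact d2_eq_d2_iff (Ne.symm hzx) (Ne.symm hzy)

lemma Twins.adj_iff (htw : Twins G x y) (hzx : z ≠ x) (hzy : z ≠ y) :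
    G.Adj x z ↔ G.Adj y z :=
  (twins_iff.1 htw).2 z hzx hzy

lemma Twins.symm (htw : Twins G x y) : Twins G y x :=
  twins_iff.2 ⟨htw.1.symm, fun _ hzy hzx => (htw.adj_iff hzx hzy).symm⟩

lemma adj_iff_eq_of_degree_eq_one [Fintype (G.neighborSet u)] (hu : G.degree u = 1)
    (hus : G.Adj u s) : G.Adj u z ↔ z = s := by
  obtain ⟨w, -, hw⟩ := degree_eq_one_iff_existsUnique_adj.1 hu
  exact ⟨fun h => (hw z h).trans (hw s hus).symm, fun h => h ▸ hus⟩

lemma twins_of_degree_eq_one [Fintype (G.neighborSet x)] [Fintype (G.neighborSet y)]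
    (hxy : x ≠ y) (hx : G.degree x = 1) (hy : G.degree y = 1) (hxs : G.Adj x s)
    (hys : G.Adj y s) : Twins G x y :=
  twins_iff.2 ⟨hxy, fun _ _ _ => by
    rw [adj_iff_eq_of_degree_eq_one hx hxs, adj_iff_eq_of_degree_eq_one hy hys]⟩

end TruncatedDistance

section DistinguishingSets

variable [Fintype V]

@[simp]
lemma mem_cSet : z ∈ CSet G x y ↔ d2 G x z ≠ d2 G y z := by
  simp [CSet]

lemma pair_subset_cSet (hxy : x ≠ y) : {x, y} ⊆ CSet G x y := by
  intro z hz
  rw [mem_cSet]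
  intro h
  have h0 : x = z ↔ y = z := by rw [← d2_eq_zero_iff (G := G), h, d2_eq_zero_iff]
  rw [mem_insert, mem_singleton] at hz
  rcases hz with rfl | rfl <;> simp_all

lemma two_le_card_cSet (hxy : x ≠ y) : 2 ≤ #(CSet G x y) :=
  (card_pair hxy).symm.le.trans (card_le_card (pair_subset_cSet hxy))

lemma card_cSet_le_two_iff (hxy : x ≠ y) : #(CSet G x y) ≤ 2 ↔ Twins G x y := by
  constructor
  · intro h
    have hC : {x, y} = CSet G x y :=
      eq_of_subset_of_card_le (pair_subset_cSet hxy) (by rwa [card_pair hxy])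
    refine ⟨hxy, fun z hzx hzy => not_not.1 fun hz => ?_⟩
    have : z ∈ ({x, y} : Finset V) := hC ▸ mem_cSet.2 hz
    rw [mem_insert, mem_singleton] at this
    exact this.elim hzx hzy
  · intro htw
    refine (card_le_card (t := {x, y}) fun z hz => ?_).trans card_le_two
    by_contra hzxy
    simp only [mem_insert, mem_singleton, not_or] at hzxy
    exact mem_cSet.1 hz (htw.2 z hzxy.1 hzxy.2)

lemma card_cSet_le_degree_add_one [DecidableRel G.Adj] (hu : G.degree u = 1)
    (hus : G.Adj u s) : #(CSet G u s) ≤ G.degree s + 1 := by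
  have hsub : CSet G u s ⊆ insert s (G.neighborFinset s) := by
    intro z hz
    by_contra hzs
    rw [mem_insert, mem_neighborFinset, not_or] at hzs
    have hzu : z ≠ u := fun h => hzs.2 (h ▸ hus.symm)
    refine mem_cSet.1 hz ((d2_eq_d2_iff (Ne.symm hzu) (Ne.symm hzs.1)).2 ?_)
    rw [adj_iff_eq_of_degree_eq_one hu hus]
    exact iff_of_false hzs.1 hzs.2
  calc #(CSet G u s) ≤ #(insert s (G.neighborFinset s)) := card_le_card hsub
    _ ≤ G.degree s + 1 := (card_insert_le _ _).trans (by rw [card_neighborFinset_eq_degree])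

lemma cmin_le_card_cSet (hxy : x ≠ y) : Cmin G ≤ #(CSet G x y) :=
  Nat.sInf_le ⟨x, y, hxy, rfl⟩

lemma exists_card_cSet_eq_cmin [Nontrivial V] : ∃ x y, x ≠ y ∧ #(CSet G x y) = Cmin G := by
  obtain ⟨x, y, hxy⟩ := exists_pair_ne V
  exact Nat.sInf_mem (s := {m | ∃ x y : V, x ≠ y ∧ #(CSet G x y) = m}) ⟨_, x, y, hxy, rfl⟩

lemma le_cmin_iff [Nontrivial V] : k ≤ Cmin G ↔ ∀ x y, x ≠ y → k ≤ #(CSet G x y) := by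
  refine ⟨fun h x y hxy => h.trans (cmin_le_card_cSet hxy), fun h => ?_⟩
  obtain ⟨x, y, hxy, hC⟩ := exists_card_cSet_eq_cmin (G := G)
  exact hC ▸ h x y hxy

lemma two_le_cmin [Nontrivial V] : 2 ≤ Cmin G :=
  le_cmin_iff.2 fun _ _ => two_le_card_cSet

lemma cmin_eq_two_iff [Nontrivial V] : Cmin G = 2 ↔ ∃ x y, Twins G x y := by
  constructor
  · intro h
    obtain ⟨x, y, hxy, hC⟩ := exists_card_cSet_eq_cmin (G := G)
    exact ⟨x, y, (card_cSet_le_two_iff hxy).1 (hC.trans h).le⟩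
  · rintro ⟨x, y, htw⟩
    have := (cmin_le_card_cSet htw.1).trans ((card_cSet_le_two_iff htw.1).2 htw)
    exact le_antisymm this two_le_cmin

lemma exists_isKAdjGen_iff_le_cmin [Nontrivial V] :
    (∃ S, IsKAdjGen G k S) ↔ k ≤ Cmin G := by
  refine ⟨fun ⟨S, hS⟩ => le_cmin_iff.2 fun x y hxy => ?_, fun h => ⟨univ, le_cmin_iff.1 h⟩⟩
  exact (hS x y hxy).trans (card_le_card (filter_subset_filter _ (subset_univ S)))

lemma isKAdjDimensional_iff_eq_cmin [Nontrivial V] : IsKAdjDimensional G k ↔ k = Cmin G := by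
  simp only [IsKAdjDimensional, exists_isKAdjGen_iff_le_cmin, not_le]
  constructor
  · rintro ⟨hle, hgt⟩
    exact le_antisymm hle (not_lt.1 fun h => (hgt _ h).not_ge le_rfl)
  · rintro rfl
    exact ⟨le_rfl, fun _ => id⟩

end DistinguishingSets

section Trees

lemma _root_.SimpleGraph.IsAcyclic.subsingleton_commonNeighbors (hG : G.IsAcyclic)
    (hxy : x ≠ y) : (G.commonNeighbors x y).Subsingleton := by
  intro a ha b hb
  rw [mem_commonNeighbors] at ha hb
  have hpath : ∀ {c} (hxc : G.Adj x c) (hyc : G.Adj y c),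
      (Walk.cons hxc (Walk.cons hyc.symm Walk.nil)).IsPath := by
    intro c hxc hyc
    simp [hxc.ne, hyc.ne', hxy]
  have := (hG.subsingleton_path x y).elim ⟨_, hpath ha.1 ha.2⟩ ⟨_, hpath hb.1 hb.2⟩
  simpa using congrArg (fun p : G.Path x y => p.1.snd) this

lemma _root_.SimpleGraph.IsAcyclic.degree_eq_one_of_forall_length_le
    [Fintype (G.neighborSet u)] (hG : G.IsAcyclic) {v : V} {p : G.Walk u v} (hp : p.IsPath)
    (hnil : ¬p.Nil) (hmax : ∀ a b (q : G.Walk a b), q.IsPath → q.length ≤ p.length) :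
    G.degree u = 1 := by
  refine degree_eq_one_iff_existsUnique_adj.2 ⟨p.snd, p.adj_snd hnil, fun w huw => ?_⟩
  refine hG.eq_snd_of_adj_start hp huw (not_not.1 fun hw => ?_)
  simpa using hmax _ _ _ (hp.cons hw (h := huw.symm))

variable [Fintype V]

lemma Twins.not_adj_of_isTree (htw : Twins G x y) (hG : G.IsTree) (h3 : 3 ≤ Fintype.card V) :
    ¬G.Adj x y := by
  intro hxy
  obtain ⟨z, hzx, hzy⟩ := ENat.exists_ne_ne_of_three_le (by simpa using h3) x y
  obtain ⟨d, -, hd, hd'⟩ :=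
    (hG.connected x z).some.exists_boundary_dart {x, y} (by simp) (by simp [hzx, hzy])
  simp only [Set.mem_insert_iff, Set.mem_singleton_iff, not_or] at hd hd'
  have hxb : G.Adj x d.snd := by
    rcases hd with h | h
    · exact h ▸ d.adj
    · exact (htw.adj_iff hd'.1 hd'.2).2 (h ▸ d.adj)
  have hyb : G.Adj y d.snd := (htw.adj_iff hd'.1 hd'.2).1 hxb
  exact hG.isAcyclic.cliqueFree le_rfl {x, y, d.snd} (is3Clique_triple_iff.2 ⟨hxy, hxb, hyb⟩)

variable [DecidableRel G.Adj]

lemma Twins.degree_eq_one_of_isTree (htw : Twins G x y) (hG : G.IsTree)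
    (h3 : 3 ≤ Fintype.card V) : ∃ s, G.degree x = 1 ∧ G.Adj x s ∧ G.Adj y s := by
  have : Nontrivial V := Fintype.one_lt_card_iff_nontrivial.1 (by omega)
  have hxy := htw.not_adj_of_isTree hG h3
  have hcommon : ∀ {s}, G.Adj x s → G.Adj y s := fun {s} hxs =>
    (htw.adj_iff hxs.ne' fun h => hxy (h ▸ hxs)).1 hxs
  obtain ⟨s, hxs⟩ := hG.connected.preconnected.exists_adj_of_nontrivial x
  refine ⟨s, degree_eq_one_iff_existsUnique_adj.2 ⟨s, hxs, fun t hxt => ?_⟩, hxs, hcommon hxs⟩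
  exact hG.isAcyclic.subsingleton_commonNeighbors htw.1 ⟨hxt, hcommon hxt⟩ ⟨hxs, hcommon hxs⟩

lemma exists_twins_iff_of_isTree (hG : G.IsTree) (h3 : 3 ≤ Fintype.card V) :
    (∃ x y, Twins G x y) ↔ ∃ u v w : V, u ≠ v ∧ G.degree u = 1 ∧ G.degree v = 1 ∧
      G.Adj u w ∧ G.Adj v w := by
  constructor
  · rintro ⟨x, y, htw⟩
    obtain ⟨s, hx, hxs, hys⟩ := htw.degree_eq_one_of_isTree hG h3
    obtain ⟨-, hy, -⟩ := htw.symm.degree_eq_one_of_isTree hG h3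
    exact ⟨x, y, s, htw.1, hx, hy, hxs, hys⟩
  · rintro ⟨u, v, w, huv, hu, hv, huw, hvw⟩
    exact ⟨u, v, twins_of_degree_eq_one huv hu hv huw hvw⟩

/-- Every neighbour `w ≠ t` of `s` on a longest path `u s t ⋯` starts the longest path
`w s t ⋯`, so it is a leaf. -/
lemma _root_.SimpleGraph.IsTree.exists_twin_leaves_or_leaf_adj_degree_le_two [Nontrivial V]
    (hG : G.IsTree) :
    (∃ u w s, u ≠ w ∧ G.degree u = 1 ∧ G.degree w = 1 ∧ G.Adj u s ∧ G.Adj w s) ∨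
      ∃ u s, G.degree u = 1 ∧ G.Adj u s ∧ G.degree s ≤ 2 := by
  obtain ⟨u, v, p, hp, hmax⟩ := Walk.exists_isPath_forall_isPath_length_le_length G
  have hnil : ¬p.Nil := by
    obtain ⟨x, y, hxy⟩ := exists_pair_ne V
    obtain ⟨q, hq⟩ := hG.connected.exists_isPath x y
    intro h
    exact hxy (Walk.eq_of_length_eq_zero (Nat.le_zero.1 (h.length_eq_zero ▸ hmax _ _ q hq)))
  set s := p.snd
  set t := p.tail.snd
  have hu := hG.isAcyclic.degree_eq_one_of_forall_length_le hp hnil hmax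
  have hus : G.Adj u s := p.adj_snd hnil
  by_cases hleaf : ∃ w, G.Adj s w ∧ w ≠ u ∧ w ≠ t
  · obtain ⟨w, hsw, hwu, hwt⟩ := hleaf
    have hwq : w ∉ p.tail.support := fun hw =>
      hwt (hG.isAcyclic.eq_snd_of_adj_start hp.tail hsw hw)
    have hmax' : ∀ a b (q : G.Walk a b), q.IsPath → q.length ≤ (p.tail.cons hsw.symm).length := by
      rwa [Walk.length_cons, p.length_tail_add_one hnil]
    have hw := hG.isAcyclic.degree_eq_one_of_forall_length_le (hp.tail.cons hwq)
      Walk.not_nil_cons hmax'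
    exact .inl ⟨u, w, s, hwu.symm, hu, hw, hus, hsw.symm⟩
  · push Not at hleaf
    refine .inr ⟨u, s, hu, hus, ?_⟩
    have hN : G.neighborFinset s ⊆ {u, t} := fun w hw => by
      rw [mem_neighborFinset] at hw
      by_cases hwu : w = u
      · simp [hwu]
      · simp [hleaf w hw hwu]
    rw [← card_neighborFinset_eq_degree]
    exact (card_le_card hN).trans card_le_two

lemma cmin_le_three_of_isTree [Nontrivial V] (hG : G.IsTree) : Cmin G ≤ 3 := by
  rcases hG.exists_twin_leaves_or_leaf_adj_degree_le_two with
    ⟨u, w, s, huw, hu, hw, hus, hws⟩ | ⟨u, s, hu, hus, hs⟩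
  · have := (card_cSet_le_two_iff huw).2 (twins_of_degree_eq_one huw hu hw hus hws)
    exact (cmin_le_card_cSet huw).trans (by omega)
  · have := card_cSet_le_degree_add_one hu hus
    exact (cmin_le_card_cSet hus.ne).trans (by omega)

end Trees

/-- For a `k`-adjacency dimensional tree of order at least three, `k ∈ {2,3}`,
and `k = 2` iff there are two distinct leaves sharing a common support vertex. -/
theorem tree_kAdjDimensional [Fintype V] (T : SimpleGraph V) [DecidableRel T.Adj]
    (htree : T.IsTree) (h : 3 ≤ Fintype.card V) (k : ℕ)
    (hdim : IsKAdjDimensional T k) :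
    (k = 2 ∨ k = 3) ∧
      (k = 2 ↔ ∃ u v w : V, u ≠ v ∧ T.degree u = 1 ∧ T.degree v = 1 ∧
        T.Adj u w ∧ T.Adj v w) := by
  have : Nontrivial V := Fintype.one_lt_card_iff_nontrivial.1 (by omega)
  obtain rfl := isKAdjDimensional_iff_eq_cmin.1 hdim
  have := two_le_cmin (G := T)
  have := cmin_le_three_of_isTree htree
  exact ⟨by omega, cmin_eq_two_iff.trans (exists_twins_iff_of_isTree htree h)⟩

end
end AdjDim
end

section
/- Let G be a finite simple graph that is k-adjacency dimensional, and let k1, k2 be integers with 1 ≤ k1 < k2 ≤ k. Then adim_{k1}(G) < adim_{k2}(G). -/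
open Finset

namespace AdjDim

noncomputable section
open Classical

variable {V W : Type*}

/-!
Deleting one vertex from a `k`-adjacency generator lowers the number of distinguishing
vertices of each pair by at most one, so it leaves a `(k - 1)`-adjacency generator. Applied to
a `k₂`-adjacency basis, this gives a `k₁`-adjacency generator of size `adim_{k₂}(G) - 1`. The
basis is nonempty because a `k`-adjacency dimensional graph has two distinct vertices: on at
most one vertex every set is a generator for every `k`, contradicting the maximality of `k`.
-/

section

variable [Fintype V] {G : SimpleGraph V} {k : ℕ} {S : Finset V}

theorem IsKAdjGen.mono {k' : ℕ} (hS : IsKAdjGen G k S) (hk : k' ≤ k) : IsKAdjGen G k' S :=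
  fun x y hxy => hk.trans (hS x y hxy)

theorem IsKAdjGen.erase (hS : IsKAdjGen G k S) (v : V) : IsKAdjGen G (k - 1) (S.erase v) := by
  intro x y hxy
  rw [filter_erase]
  exact (Nat.sub_le_sub_right (hS x y hxy) 1).trans pred_card_le_card_erase

theorem IsKAdjGen.le_card [Nontrivial V] (hS : IsKAdjGen G k S) : k ≤ S.card := by
  obtain ⟨x, y, hxy⟩ := exists_pair_ne V
  exact (hS x y hxy).trans (card_filter_le _ _)

theorem isKAdjGen_of_subsingleton [Subsingleton V] (k : ℕ) (S : Finset V) :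
    IsKAdjGen G k S :=
  fun x y hxy => absurd (Subsingleton.elim x y) hxy

theorem IsKAdjDimensional.nontrivial (hdim : IsKAdjDimensional G k) : Nontrivial V := by
  by_contra h
  rw [not_nontrivial_iff_subsingleton] at h
  exact hdim.2 (k + 1) k.lt_succ_self ⟨∅, isKAdjGen_of_subsingleton _ _⟩

theorem adim_le_card (hS : IsKAdjGen G k S) : adim G k ≤ S.card :=
  Nat.sInf_le ⟨S, hS, rfl⟩

theorem exists_isKAdjBasis (h : ∃ S : Finset V, IsKAdjGen G k S) :
    ∃ B : Finset V, IsKAdjBasis G k B := by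
  obtain ⟨S, hS⟩ := h
  exact Nat.sInf_mem (s := {n | ∃ T : Finset V, IsKAdjGen G k T ∧ T.card = n})
    ⟨_, S, hS, rfl⟩

end

theorem adim_strictMono_general [Fintype V] (G : SimpleGraph V) (k k₁ k₂ : ℕ)
    (hdim : IsKAdjDimensional G k) (h12 : k₁ < k₂) (h2 : k₂ ≤ k) :
    adim G k₁ < adim G k₂ := by
  have := hdim.nontrivial
  obtain ⟨S, hS⟩ := hdim.1
  obtain ⟨B, hB, hBcard⟩ := exists_isKAdjBasis ⟨S, hS.mono h2⟩
  obtain ⟨v, hv⟩ : B.Nonempty := card_pos.mp (by have := hB.le_card; omega)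
  calc adim G k₁ ≤ (B.erase v).card := adim_le_card ((hB.erase v).mono (by omega))
    _ < B.card := card_erase_lt_of_mem hv
    _ = adim G k₂ := hBcard

/-- Theorem 3.1 (Monotony): if `G` is `k`-adjacency dimensional and
`1 ≤ k₁ < k₂ ≤ k`, then `adim_{k₁}(G) < adim_{k₂}(G)`. -/
theorem adim_strictMono [Fintype V] (G : SimpleGraph V) (k k₁ k₂ : ℕ)
    (hdim : IsKAdjDimensional G k) (h1 : 1 ≤ k₁) (h12 : k₁ < k₂) (h2 : k₂ ≤ k) :
    adim G k₁ < adim G k₂ :=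
  adim_strictMono_general G k k₁ k₂ hdim h12 h2

end
end AdjDim
end

section
/- For every integer n ≥ 4, the path graph P_n satisfies adim_2(P_n) = ⌈(n+1)/2⌉ and adim_3(P_n) = n − ⌊(n−4)/5⌋. -/
open Finset

namespace AdjDim

noncomputable section
open Classical

variable {V W : Type*}

/-!
Number the vertices of `P_n` as `0, …, n - 1`. For `x < y` the set `C(x, y)` of vertices
distinguishing `x` and `y` is `{x - 1, …, x + 2}` if `y = x + 1`, `{x - 1, x, x + 2, x + 3}` if
`y = x + 2`, and contains the closed neighbourhoods of `x` and `y` otherwise (clipped to `[0, n)`).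

Upper bounds: if the holes `H` (the vertices outside `S`) are `p`-separated and keep `p - 1`
vertices free at both ends, every window of `p` consecutive vertices meets `H` at most once, and
at the ends not at all. For `p = 2` this makes `S` a 2-adjacency generator, for `p = 5` a
3-adjacency generator; the holes `t ≡ -1 (mod p)` with `t + p ≤ n` give `|S| = n - ⌊(n + 1 - p)/p⌋`.

Lower bounds: for `k = 3` the sets `C(x, x + 1)`, `C(x, x + 2)` have at most four points, so a
3-adjacency generator misses at most one of them; hence its holes are 5-separated and away from the
ends, and there are at most `⌊(n - 4)/5⌋` of them. For `k = 2`, place the path at positions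
`1, …, n` of `[0, n + 2)`. Every window of four consecutive positions is a shifted `C(x, x + 1)`,
possibly with an empty end position added, so it contains two vertices of `S`; stepping four
positions at a time gives `n + 2 ≤ 2|S| + 1`, with `C(0, 2)` settling the one remainder (length 6)
that windows alone do not.
-/

open SimpleGraph

theorem cSet_comm (G : SimpleGraph V) [Fintype V] (x y : V) : CSet G x y = CSet G y x := by
  simp only [CSet, ne_comm]

theorem isKAdjGen_iff_le_card_inter_cSet {G : SimpleGraph V} [Fintype V] [DecidableEq V]
    {k : ℕ} {S : Finset V} : IsKAdjGen G k S ↔ ∀ x y, x ≠ y → k ≤ #(S ∩ CSet G x y) := by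
  simp only [IsKAdjGen, CSet, inter_filter, inter_univ]

theorem adim_eq_card {G : SimpleGraph V} [Fintype V] {k : ℕ} {S₀ : Finset V}
    (h₀ : IsKAdjGen G k S₀) (hmin : ∀ S, IsKAdjGen G k S → #S₀ ≤ #S) : adim G k = #S₀ :=
  le_antisymm (Nat.sInf_le ⟨S₀, h₀, rfl⟩)
    (le_csInf ⟨_, S₀, h₀, rfl⟩ (by rintro _ ⟨S, hS, rfl⟩; exact hmin S hS))

section CardInter

variable {α : Type*} [DecidableEq α] {s C D : Finset α} {k : ℕ}

theorem card_sdiff_add_le_of_le_card_inter (hk : k ≤ #(s ∩ C)) (hCD : C ⊆ D) :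
    #(C \ s) + k ≤ #D := by
  have := card_sdiff_add_card_inter C s
  have := card_le_card hCD
  rw [inter_comm] at hk
  omega

theorem subset_of_le_card_inter (hk : k ≤ #(s ∩ C)) (hCD : C ⊆ D) (hD : #D ≤ k) : C ⊆ s := by
  have := card_sdiff_add_le_of_le_card_inter hk hCD
  exact sdiff_eq_empty_iff_subset.1 (card_eq_zero.1 (by omega))

theorem card_sdiff_le_one_of_le_card_inter (hk : k ≤ #(s ∩ C)) (hCD : C ⊆ D) (hD : #D ≤ k + 1) :
    #(C \ s) ≤ 1 := by
  have := card_sdiff_add_le_of_le_card_inter hk hCD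
  omega

end CardInter

variable {n : ℕ}

-- `a - b + (b - a)` is `|a - b|` in `ℕ`.
theorem d2_pathGraph (x w : Fin n) : d2 (pathGraph n) x w = min ((x : ℕ) - w + (w - x)) 2 := by
  simp only [d2, pathGraph_adj, Fin.ext_iff]
  split_ifs <;> omega

def pathCSet (n x y : ℕ) : Finset ℕ :=
  {w ∈ range n | min (x - w + (w - x)) 2 ≠ min (y - w + (w - y)) 2}

theorem mem_pathCSet {x y w : ℕ} :
    w ∈ pathCSet n x y ↔ w < n ∧ min (x - w + (w - x)) 2 ≠ min (y - w + (w - y)) 2 := by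
  rw [pathCSet, mem_filter, mem_range]

theorem map_cSet_pathGraph (x y : Fin n) :
    (CSet (pathGraph n) x y).map Fin.valEmbedding = pathCSet n x y := by
  ext w
  simp only [CSet, d2_pathGraph, mem_map, mem_filter, mem_univ, true_and, Fin.valEmbedding_apply,
    mem_pathCSet]
  constructor
  · rintro ⟨w, hw, rfl⟩; exact ⟨w.isLt, hw⟩
  · rintro ⟨hw, h⟩; exact ⟨⟨w, hw⟩, h, rfl⟩

theorem isKAdjGen_pathGraph_iff {k : ℕ} {S : Finset (Fin n)} :
    IsKAdjGen (pathGraph n) k S ↔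
      ∀ x y, x < y → y < n → k ≤ #(S.map Fin.valEmbedding ∩ pathCSet n x y) := by
  have hcard (x y : Fin n) :
      #(S ∩ CSet (pathGraph n) x y) = #(S.map Fin.valEmbedding ∩ pathCSet n x y) := by
    rw [← map_cSet_pathGraph, ← map_inter, card_map]
  rw [isKAdjGen_iff_le_card_inter_cSet]
  constructor
  · intro hS x y hxy hy
    have hne : (⟨x, by omega⟩ : Fin n) ≠ ⟨y, hy⟩ := by simp only [ne_eq, Fin.mk.injEq]; omega
    simpa [hcard] using hS _ _ hne
  · intro hS x y hxy
    rcases lt_or_gt_of_ne hxy with h | h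
    · rw [hcard]; exact hS _ _ h y.isLt
    · rw [cSet_comm, hcard]; exact hS _ _ h x.isLt

theorem map_filter_val_notMem (H : Finset ℕ) :
    ({w : Fin n | (w : ℕ) ∉ H} : Finset (Fin n)).map Fin.valEmbedding = range n \ H := by
  ext w
  simp only [mem_map, mem_filter, mem_univ, true_and, Fin.valEmbedding_apply, mem_sdiff, mem_range]
  constructor
  · rintro ⟨w, hw, rfl⟩; exact ⟨w.isLt, hw⟩
  · rintro ⟨hw, h⟩; exact ⟨⟨w, hw⟩, h, rfl⟩

theorem isKAdjGen_pathGraph_filter_notMem_iff {k : ℕ} {H : Finset ℕ} :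
    IsKAdjGen (pathGraph n) k {w : Fin n | (w : ℕ) ∉ H} ↔
      ∀ x y, x < y → y < n → k ≤ #(pathCSet n x y \ H) := by
  have (x y : ℕ) : (range n \ H) ∩ pathCSet n x y = pathCSet n x y \ H := by
    ext w; simp only [mem_inter, mem_sdiff, mem_range, mem_pathCSet]; tauto
  simp only [isKAdjGen_pathGraph_iff, map_filter_val_notMem, this]

theorem card_add_card_range_sdiff_map (S : Finset (Fin n)) :
    #S + #(range n \ S.map Fin.valEmbedding) = n := by
  rw [← card_map Fin.valEmbedding, add_comm, card_sdiff_add_card_eq_card, card_range]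
  intro w hw
  obtain ⟨w, -, rfl⟩ := mem_map.1 hw
  exact mem_range.2 w.isLt

def IsSpread (p n : ℕ) (H : Finset ℕ) : Prop :=
  (∀ t ∈ H, p ≤ t + 1 ∧ t + p ≤ n) ∧ ∀ t ∈ H, ∀ t' ∈ H, t < t' → t + p ≤ t'

def pathHoles (p n : ℕ) : Finset ℕ := {t ∈ range (n + 1 - p) | p ∣ t + 1}

theorem card_pathHoles (p n : ℕ) : #(pathHoles p n) = (n + 1 - p) / p :=
  Nat.card_multiples _ _

theorem pathHoles_subset_range {p : ℕ} (hp : 0 < p) : pathHoles p n ⊆ range n := fun t ht => by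
  simp only [pathHoles, mem_filter, mem_range] at ht ⊢; omega

theorem isSpread_pathHoles (p : ℕ) : IsSpread p n (pathHoles p n) := by
  simp only [IsSpread, pathHoles, mem_filter, mem_range]
  refine ⟨fun t ⟨ht, hd⟩ => ⟨Nat.le_of_dvd t.succ_pos hd, by omega⟩, ?_⟩
  rintro t ⟨-, ht⟩ t' ⟨-, ht'⟩ hlt
  have := Nat.le_of_dvd (by omega) (Nat.dvd_sub ht' ht)
  omega

theorem card_filter_val_notMem_pathHoles {p : ℕ} (hp : 0 < p) :
    #({w : Fin n | (w : ℕ) ∉ pathHoles p n} : Finset (Fin n)) = n - (n + 1 - p) / p := by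
  rw [← card_map Fin.valEmbedding, map_filter_val_notMem,
    card_sdiff_of_subset (pathHoles_subset_range hp), card_range, card_pathHoles]

theorem div_lt_div_of_add_le {a b p : ℕ} (hp : 0 < p) (h : a + p ≤ b) : a / p < b / p :=
  calc a / p < a / p + 1 := Nat.lt_succ_self _
    _ = (a + p) / p := (Nat.add_div_right a hp).symm
    _ ≤ b / p := Nat.div_le_div_right h

theorem card_le_of_isSpread {p : ℕ} (hp : 0 < p) {H : Finset ℕ} (hH : IsSpread p n H) :
    #H ≤ (n + 1 - p) / p := by
  obtain ⟨hends, hsep⟩ := hH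
  have hlt {t t' : ℕ} (ht : t ∈ H) (ht' : t' ∈ H) (h : t < t') :
      (t + 1 - p) / p < (t' + 1 - p) / p :=
    div_lt_div_of_add_le hp (by have := hsep t ht t' ht' h; have := hends t ht; omega)
  calc #H ≤ #(range ((n + 1 - p) / p)) := by
        refine card_le_card_of_injOn (fun t => (t + 1 - p) / p) (fun t ht => ?_)
          fun t ht t' ht' heq => ?_
        · exact mem_range.2 (div_lt_div_of_add_le hp (by have := hends t ht; omega))
        · by_contra hne
          rcases lt_or_gt_of_ne hne with h | h
          · exact (hlt ht ht' h).ne heq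
          · exact (hlt ht' ht h).ne' heq
    _ = (n + 1 - p) / p := card_range _

section Spread

variable {p : ℕ} {H : Finset ℕ} (hH : IsSpread p n H)
include hH

theorem card_le_card_sdiff_add_one {D : Finset ℕ} {a : ℕ} (hD : ∀ w ∈ D, a ≤ w ∧ w < a + p) :
    #D ≤ #(D \ H) + 1 := by
  have h : #(D ∩ H) ≤ 1 := card_le_one.2 fun t ht t' ht' => by
    rw [mem_inter] at ht ht'
    have := hD t ht.1; have := hD t' ht'.1
    by_contra hne
    rcases lt_or_gt_of_ne hne with h | h
    · have := hH.2 t ht.2 t' ht'.2 h; omega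
    · have := hH.2 t' ht'.2 t ht.2 h; omega
  have := card_sdiff_add_card_inter D H
  omega

theorem sdiff_eq_self_of_isSpread {D : Finset ℕ} (hD : ∀ w ∈ D, w + 1 < p ∨ n < w + p) :
    D \ H = D :=
  sdiff_eq_self_of_disjoint <| disjoint_left.2 fun w hw hwH => by
    have := hH.1 w hwH; have := hD w hw; omega

end Spread

theorem isKAdjGen_two_of_isSpread {H : Finset ℕ} (hH : IsSpread 2 n H) :
    IsKAdjGen (pathGraph n) 2 {w : Fin n | (w : ℕ) ∉ H} := by
  rw [isKAdjGen_pathGraph_filter_notMem_iff]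
  intro x y hxy hy
  obtain ⟨hends, hsep⟩ := hH
  obtain ⟨a, haH, ha⟩ : ∃ a ∉ H, a + 1 = x ∨ a = x := by
    by_cases hx : x ∈ H
    · have := hends x hx
      exact ⟨x - 1, fun h => by have := hsep _ h _ hx; omega, by omega⟩
    · exact ⟨x, hx, Or.inr rfl⟩
  obtain ⟨b, hbH, hb⟩ : ∃ b ∉ H, b < n ∧ (b = y ∨ b = y + 1) := by
    by_cases hy' : y ∈ H
    · have := hends y hy'
      exact ⟨y + 1, fun h => by have := hsep _ hy' _ h; omega, by omega⟩
    · exact ⟨y, hy', hy, Or.inl rfl⟩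
  refine one_lt_card.2 ⟨a, ?_, b, ?_, by omega⟩ <;>
    simp only [mem_sdiff, mem_pathCSet] <;> exact ⟨⟨by omega, by omega⟩, ‹_›⟩

section Spread5

variable {H : Finset ℕ} (hH : IsSpread 5 n H)
include hH

theorem add_one_le_card_Icc_sdiff {v r : ℕ} (hr : r ≤ 3) (hrn : r < n) (hv : v + r ≤ n) :
    r + 1 ≤ #(Icc (v - 1) (min (v + r) (n - 1)) \ H) := by
  have hcard : #(Icc (v - 1) (min (v + r) (n - 1))) = min (v + r) (n - 1) + 1 - (v - 1) :=
    Nat.card_Icc _ _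
  by_cases hint : 1 ≤ v ∧ v + r < n
  · have := card_le_card_sdiff_add_one hH (a := v - 1)
      (D := Icc (v - 1) (min (v + r) (n - 1))) fun w hw => by rw [mem_Icc] at hw; omega
    omega
  · rw [sdiff_eq_self_of_isSpread hH (D := Icc (v - 1) (min (v + r) (n - 1))) fun w hw => by
      rw [mem_Icc] at hw; omega]
    omega

theorem three_le_card_pathCSet_add_two_sdiff (hn : 4 ≤ n) {x : ℕ} (hx : x + 2 < n) :
    3 ≤ #(pathCSet n x (x + 2) \ H) := by
  let D := (Icc (x - 1) (min (x + 3) (n - 1))).erase (x + 1)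
  have hcard : #D = min (x + 3) (n - 1) + 1 - (x - 1) - 1 := by
    rw [card_erase_of_mem (mem_Icc.2 (by omega)), Nat.card_Icc]
  have hD : D ⊆ pathCSet n x (x + 2) := fun w hw => by
    simp only [D, mem_erase, mem_Icc] at hw; rw [mem_pathCSet]; omega
  refine le_trans ?_ (card_le_card (sdiff_subset_sdiff hD le_rfl))
  by_cases hint : 1 ≤ x ∧ x + 4 ≤ n
  · have := card_le_card_sdiff_add_one hH (a := x - 1) (D := D) fun w hw => by
      simp only [D, mem_erase, mem_Icc] at hw; omega
    omega
  · rw [sdiff_eq_self_of_isSpread hH (D := D) fun w hw => by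
      simp only [D, mem_erase, mem_Icc] at hw; omega]
    omega

theorem isKAdjGen_three_of_isSpread (hn : 4 ≤ n) :
    IsKAdjGen (pathGraph n) 3 {w : Fin n | (w : ℕ) ∉ H} := by
  rw [isKAdjGen_pathGraph_filter_notMem_iff]
  intro x y hxy hy
  have hsub {D : Finset ℕ} (hD : ∀ w ∈ D, w ∈ pathCSet n x y) :
      #(D \ H) ≤ #(pathCSet n x y \ H) :=
    card_le_card (sdiff_subset_sdiff hD le_rfl)
  obtain rfl | rfl | hfar : y = x + 1 ∨ y = x + 2 ∨ x + 3 ≤ y := by omega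
  · refine le_trans (add_one_le_card_Icc_sdiff hH (v := x) (r := 2) (by norm_num) (by omega) hy)
      (hsub fun w hw => ?_)
    rw [mem_Icc] at hw; rw [mem_pathCSet]; omega
  · exact three_le_card_pathCSet_add_two_sdiff hH hn hy
  let L := Icc (x - 1) (min (x + 1) (n - 1))
  let R := Icc (y - 1) (min (y + 1) (n - 1))
  have hdisj : Disjoint (L \ H) (R \ H) := disjoint_left.2 fun w hwL hwR => by
    simp only [L, R, mem_sdiff, mem_Icc] at hwL hwR; omega
  calc 3 ≤ 1 + 1 + (1 + 1) := by norm_num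
    _ ≤ #(L \ H) + #(R \ H) :=
        add_le_add (add_one_le_card_Icc_sdiff hH (by norm_num) (by omega) (by omega))
          (add_one_le_card_Icc_sdiff hH (by norm_num) (by omega) (by omega))
    _ = #((L ∪ R) \ H) := by rw [union_sdiff_distrib, card_union_of_disjoint hdisj]
    _ ≤ #(pathCSet n x y \ H) := hsub fun w hw => by
        simp only [L, R, mem_union, mem_Icc] at hw; rw [mem_pathCSet]; omega

end Spread5

section ThreeLeCardInter

variable {s : Finset ℕ} (hs : ∀ x y, x < y → y < n → 3 ≤ #(s ∩ pathCSet n x y))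
include hs

theorem five_le_succ_and_add_five_le_of_notMem (hn : 2 ≤ n) {t : ℕ} (ht : t < n) (hts : t ∉ s) :
    5 ≤ t + 1 ∧ t + 5 ≤ n := by
  by_contra hcon
  refine hts ?_
  obtain h | h | h | h : t ≤ 2 ∨ t = 3 ∨ n ≤ t + 3 ∨ t + 4 = n := by omega
  · refine subset_of_le_card_inter (hs 0 1 (by omega) (by omega)) (D := {0, 1, 2})
      (fun w hw => ?_) card_le_three (by rw [mem_pathCSet]; omega)
    rw [mem_pathCSet] at hw; simp only [mem_insert, mem_singleton]; omega
  · refine subset_of_le_card_inter (hs 0 2 (by omega) (by omega)) (D := {0, 2, 3})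
      (fun w hw => ?_) card_le_three (by rw [mem_pathCSet]; omega)
    rw [mem_pathCSet] at hw; simp only [mem_insert, mem_singleton]; omega
  · refine subset_of_le_card_inter (hs (n - 2) (n - 1) (by omega) (by omega))
      (D := {n - 3, n - 2, n - 1}) (fun w hw => ?_) card_le_three (by rw [mem_pathCSet]; omega)
    rw [mem_pathCSet] at hw; simp only [mem_insert, mem_singleton]; omega
  · refine subset_of_le_card_inter (hs (n - 3) (n - 1) (by omega) (by omega))
      (D := {n - 4, n - 3, n - 1}) (fun w hw => ?_) card_le_three (by rw [mem_pathCSet]; omega)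
    rw [mem_pathCSet] at hw; simp only [mem_insert, mem_singleton]; omega

theorem add_five_le_of_notMem (hn : 2 ≤ n) {t t' : ℕ} (hts : t ∉ s) (ht' : t' < n) (ht's : t' ∉ s)
    (hlt : t < t') : t + 5 ≤ t' := by
  have := five_le_succ_and_add_five_le_of_notMem hs hn ht' ht's
  by_contra hcon
  have two_holes {x y : ℕ} (h : #(pathCSet n x y \ s) ≤ 1) (htC : t ∈ pathCSet n x y)
      (ht'C : t' ∈ pathCSet n x y) : False :=
    absurd (one_lt_card.2 ⟨t, mem_sdiff.2 ⟨htC, hts⟩, t', mem_sdiff.2 ⟨ht'C, ht's⟩, hlt.ne⟩)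
      (not_lt.2 h)
  obtain h | h : t' ≤ t + 3 ∨ t' = t + 4 := by omega
  · refine two_holes (card_sdiff_le_one_of_le_card_inter (hs (t + 1) (t + 2) (by omega) (by omega))
      (D := {t, t + 1, t + 2, t + 3}) (fun w hw => ?_) card_le_four) ?_ ?_
    · rw [mem_pathCSet] at hw; simp only [mem_insert, mem_singleton]; omega
    all_goals rw [mem_pathCSet]; omega
  · refine two_holes (card_sdiff_le_one_of_le_card_inter (hs (t + 1) (t + 3) (by omega) (by omega))
      (D := {t, t + 1, t + 3, t + 4}) (fun w hw => ?_) card_le_four) ?_ ?_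
    · rw [mem_pathCSet] at hw; simp only [mem_insert, mem_singleton]; omega
    all_goals rw [mem_pathCSet]; omega

theorem isSpread_range_sdiff_of_three_le_card_inter (hn : 2 ≤ n) : IsSpread 5 n (range n \ s) := by
  simp only [IsSpread, mem_sdiff, mem_range]
  exact ⟨fun t ht => five_le_succ_and_add_five_le_of_notMem hs hn ht.1 ht.2,
    fun t ht t' ht' => add_five_le_of_notMem hs hn ht.2 ht'.1 ht'.2⟩

end ThreeLeCardInter

theorem le_two_mul_add_one_of_window_bounds {c : ℕ → ℕ} (hmono : Monotone c)
    (hstep : ∀ m, c (m + 1) ≤ c m + 1) {L : ℕ} (hL : 4 ≤ L)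
    (hwin : ∀ a, a + 4 ≤ L → c a + 2 ≤ c (a + 4)) (hgap : 6 ≤ L → 2 ≤ c 2 + (c 5 - c 3)) :
    L ≤ 2 * c L + 1 := by
  induction L using Nat.strong_induction_on with
  | _ L ih =>
  by_cases hL8 : 8 ≤ L
  · have := ih (L - 4) (by omega) (by omega) (fun a ha => hwin a (by omega))
      (fun _ => hgap (by omega))
    have := hwin (L - 4) (by omega)
    rw [Nat.sub_add_cancel (by omega)] at this
    omega
  have h04 : c 0 + 2 ≤ c 4 := hwin 0 (by omega)
  have h34 : c 4 ≤ c 3 + 1 := hstep 3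
  have h23 : c 3 ≤ c 2 + 1 := hstep 2
  have h45 : c 4 ≤ c 5 := hmono (by omega)
  interval_cases L
  · omega
  · omega
  · have h26 : c 2 + 2 ≤ c 6 := hwin 2 le_rfl
    have h56 : c 5 ≤ c 6 := hmono (by omega)
    have := hgap le_rfl
    omega
  · have h37 : c 3 + 2 ≤ c 7 := hwin 3 le_rfl
    omega

theorem card_filter_add_card_filter_window (s : Finset ℕ) {a b : ℕ} (hab : a ≤ b) :
    #{w ∈ s | w + 1 < a} + #{w ∈ s | a ≤ w + 1 ∧ w + 1 < b} = #{w ∈ s | w + 1 < b} := by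
  rw [← card_union_of_disjoint (disjoint_left.2 fun w hw hw' => by
    simp only [mem_filter] at hw hw'; omega), ← filter_or]
  exact congrArg card (filter_congr fun w _ => by omega)

theorem monotone_card_filter_succ_lt (s : Finset ℕ) : Monotone fun m => #{w ∈ s | w + 1 < m} :=
  fun _ _ hab => card_le_card (monotone_filter_right s fun _ _ h => lt_of_lt_of_le h hab)

theorem card_filter_succ_lt_succ_le (s : Finset ℕ) (m : ℕ) :
    #{w ∈ s | w + 1 < m + 1} ≤ #{w ∈ s | w + 1 < m} + 1 := by
  rw [← card_filter_add_card_filter_window s (Nat.le_add_right m 1), add_le_add_iff_left]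
  exact card_le_one.2 fun w hw w' hw' => by simp only [mem_filter] at hw hw'; omega

theorem succ_le_two_mul_card_of_two_le_card_inter (hn : 4 ≤ n) {s : Finset ℕ}
    (hsn : ∀ w ∈ s, w < n) (hs : ∀ x y, x < y → y < n → 2 ≤ #(s ∩ pathCSet n x y)) :
    n + 1 ≤ 2 * #s := by
  -- In the coordinates `w + 1`, `C(0, 1)` and `C(n - 2, n - 1)` become windows `[0, 4)` and
  -- `[n - 2, n + 2)` of the same length as the interior ones.
  have hwin (a : ℕ) (ha : a + 4 ≤ n + 2) : #{w ∈ s | w + 1 < a} + 2 ≤ #{w ∈ s | w + 1 < a + 4} := by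
    rw [← card_filter_add_card_filter_window s (Nat.le_add_right a 4)]
    refine Nat.add_le_add_left ((hs a (a + 1) (by omega) (by omega)).trans
      (card_le_card fun w hw => ?_)) _
    rw [mem_inter, mem_pathCSet] at hw
    exact mem_filter.2 ⟨hw.1, by omega⟩
  have hgap : 2 ≤ #{w ∈ s | w + 1 < 2} + (#{w ∈ s | w + 1 < 5} - #{w ∈ s | w + 1 < 3}) := by
    have := (hs 0 2 (by omega) (by omega)).trans
      (card_le_card (t := {w ∈ s | w + 1 < 2 ∨ 3 ≤ w + 1 ∧ w + 1 < 5}) fun w hw => by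
        rw [mem_inter, mem_pathCSet] at hw
        exact mem_filter.2 ⟨hw.1, by omega⟩)
    rw [filter_or] at this
    have := card_union_le {w ∈ s | w + 1 < 2} {w ∈ s | 3 ≤ w + 1 ∧ w + 1 < 5}
    have := card_filter_add_card_filter_window s (show 3 ≤ 5 by omega)
    omega
  have hall : #{w ∈ s | w + 1 < n + 2} = #s :=
    congrArg card (filter_true_of_mem fun w hw => by have := hsn w hw; omega)
  have := le_two_mul_add_one_of_window_bounds (monotone_card_filter_succ_lt s)
    (card_filter_succ_lt_succ_le s) (L := n + 2) (by omega) hwin fun _ => hgap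
  omega

/-- Proposition 4.10: for `n ≥ 4`, `adim_2(P_n) = ⌈(n+1)/2⌉` and
`adim_3(P_n) = n - ⌊(n-4)/5⌋`. -/
theorem adim_pathGraph (n : ℕ) (h : 4 ≤ n) :
    adim (SimpleGraph.pathGraph n) 2 = (n + 2) / 2 ∧
      adim (SimpleGraph.pathGraph n) 3 = n - (n - 4) / 5 := by
  constructor
  · rw [show (n + 2) / 2 = n - (n + 1 - 2) / 2 by omega,
      ← card_filter_val_notMem_pathHoles two_pos]
    refine adim_eq_card (isKAdjGen_two_of_isSpread (isSpread_pathHoles 2)) fun S hS => ?_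
    have := succ_le_two_mul_card_of_two_le_card_inter h (s := S.map Fin.valEmbedding)
      (fun w hw => ?_) (isKAdjGen_pathGraph_iff.1 hS)
    · rw [card_map] at this
      rw [card_filter_val_notMem_pathHoles two_pos]
      omega
    · obtain ⟨w, -, rfl⟩ := mem_map.1 hw
      exact w.isLt
  · rw [show n - (n - 4) / 5 = n - (n + 1 - 5) / 5 by omega,
      ← card_filter_val_notMem_pathHoles (by norm_num : 0 < 5)]
    refine adim_eq_card (isKAdjGen_three_of_isSpread (isSpread_pathHoles 5) h) fun S hS => ?_
    have := card_le_of_isSpread (by norm_num)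
      (isSpread_range_sdiff_of_three_le_card_inter (isKAdjGen_pathGraph_iff.1 hS) (by omega))
    have := card_add_card_range_sdiff_map S
    rw [card_filter_val_notMem_pathHoles (by norm_num)]
    omega

end
end AdjDim
end

section
/- For every integer n ≥ 5, the cycle graph C_n satisfies adim_2(C_n) = ⌈n/2⌉, adim_3(C_n) = n − ⌊n/5⌋, and adim_4(C_n) = n. -/
open Finset

namespace AdjDim

noncomputable section
open Classical

variable {V W : Type*}

/-!
Write `C(x, y)` for the set of vertices distinguishing `x` and `y`. A set `S` is a
`k`-adjacency generator iff every `C(x, y)` contains at most `|C(x, y)| - k` vertices of the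
complement `T = Sᶜ`. On `C_n` (`n ≥ 5`) the sets `C(x, y)` are: the four consecutive vertices
around an edge; the four vertices `x - 1, x, x + 2, x + 3` for `y = x + 2`; and the two disjoint
triples `N[x] ∪ N[y]` otherwise. Hence every window of four consecutive vertices holds at most
`4 - k` points of `T`, and for `k = 3` every window of five consecutive vertices holds at most
one; averaging over the `n` windows gives `|T| ≤ n/2`, `|T| ≤ n/5` and `T = ∅` for
`k = 2, 3, 4`. Conversely, these constraints are met by `T = ∅` for `k = 4` and, for `k = 2, 3`,
by `⌊n/s⌋` vertices spaced at least `s = 2, 5` apart around the cycle.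
-/

section General
variable [Fintype V] {G : SimpleGraph V}

lemma mem_CSet_iff {x y w : V} (hxy : x ≠ y) :
    w ∈ CSet G x y ↔ w = x ∨ w = y ∨ ¬(G.Adj x w ↔ G.Adj y w) := by
  unfold CSet d2
  rw [mem_filter_univ]
  by_cases hx : x = w <;> by_cases hy : y = w <;> by_cases ax : G.Adj x w <;>
    by_cases ay : G.Adj y w <;> simp_all [eq_comm]

lemma CSet_comm (x y : V) : CSet G x y = CSet G y x := by
  simp only [CSet, ne_comm]

lemma isKAdjGen_compl_iff [DecidableEq V] {k : ℕ} {T : Finset V} :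
    IsKAdjGen G k Tᶜ ↔ ∀ x y, x ≠ y → k + #(T ∩ CSet G x y) ≤ #(CSet G x y) := by
  have hfilter : ∀ x y, Tᶜ.filter (fun w => d2 G x w ≠ d2 G y w) = CSet G x y \ T := by
    intro x y
    ext w
    simp [CSet, and_comm]
  simp only [IsKAdjGen, hfilter]
  refine forall₂_congr fun x y => imp_congr_right fun _ => ?_
  rw [inter_comm, ← card_sdiff_add_card_inter (CSet G x y) T]
  omega

lemma IsKAdjGen.add_card_compl_inter_CSet_le [DecidableEq V] {k : ℕ} {S : Finset V}
    (hS : IsKAdjGen G k S) {x y : V} (hxy : x ≠ y) :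
    k + #(Sᶜ ∩ CSet G x y) ≤ #(CSet G x y) :=
  isKAdjGen_compl_iff.mp (by rwa [compl_compl]) x y hxy

lemma adim_eq_of_isKAdjGen {k : ℕ} (S : Finset V) (hS : IsKAdjGen G k S)
    (hmin : ∀ S', IsKAdjGen G k S' → #S ≤ #S') : adim G k = #S :=
  le_antisymm (Nat.sInf_le ⟨S, hS, rfl⟩)
    (le_csInf ⟨_, S, hS, rfl⟩ fun _ ⟨S', hS', h⟩ => h ▸ hmin S' hS')

end General

lemma card_inter_union_le {α : Type*} [DecidableEq α] (T A B : Finset α) :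
    #(T ∩ (A ∪ B)) ≤ #(T ∩ A) + #(T ∩ B) := by
  rw [inter_union_distrib_left]
  exact card_union_le _ _

lemma Nat.mul_add_le_of_lt_div {n s i : ℕ} (h : i < n / s) : s * i + s ≤ n :=
  calc s * i + s = s * (i + 1) := by ring
    _ ≤ s * (n / s) := Nat.mul_le_mul_left s h
    _ ≤ n := Nat.mul_div_le n s

/- Every statement about positions on the cycle below is reduced to linear arithmetic on values
by adding an instance of `Fin.val_sub_eq_or` for each difference of vertices and calling `omega`.
Sums of vertices are kept out of these goals: `omega` unfolds their values to `(a + b) % n`,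
which it cannot handle for variable `n`. -/
lemma Fin.val_sub_eq_or {n : ℕ} (a b : Fin n) :
    (a - b).val + b.val = a.val ∨ (a - b).val + b.val = a.val + n := by
  rcases le_or_gt b a with h | h
  · rw [Fin.coe_sub_iff_le.mpr h]
    omega
  · rw [Fin.coe_sub_iff_lt.mpr h]
    omega

lemma Fin.exists_sub_val_eq {n a : ℕ} [NeZero n] (v : Fin n) (ha : a < n) :
    ∃ u : Fin n, (u - v).val = a :=
  ⟨v + Fin.ofNat n a, by rw [add_sub_cancel_left, Fin.val_ofNat, Nat.mod_eq_of_lt ha]⟩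

section Cycle
open SimpleGraph
variable {n : ℕ}

lemma cycleGraph_adj_iff_val (hn : 2 ≤ n) {x y : Fin n} :
    (cycleGraph n).Adj x y ↔ x.val + 1 = y.val ∨ y.val + 1 = x.val ∨
      (x.val + 1 = n ∧ y.val = 0) ∨ (y.val + 1 = n ∧ x.val = 0) := by
  rw [cycleGraph_adj']
  have := Fin.val_sub_eq_or x y
  have := Fin.val_sub_eq_or y x
  have := x.isLt
  have := y.isLt
  constructor <;> intro <;> omega

/-- The `c` consecutive vertices `v, v + 1, …, v + c - 1` of the cycle. -/
def arc (v : Fin n) (c : ℕ) : Finset (Fin n) := univ.filter fun w => (w - v).val < c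

lemma mem_arc {v w : Fin n} {c : ℕ} : w ∈ arc v c ↔ (w - v).val < c := by
  simp [arc]

lemma arc_mono (v : Fin n) {a b : ℕ} (h : a ≤ b) : arc v a ⊆ arc v b := fun w => by
  simp only [mem_arc]
  omega

lemma arc_subset_arc {u v : Fin n} {a b : ℕ} (h : (v - u).val + b ≤ a) :
    arc v b ⊆ arc u a := by
  intro w
  simp only [mem_arc]
  have := Fin.val_sub_eq_or w u
  have := Fin.val_sub_eq_or w v
  have := Fin.val_sub_eq_or v u
  have := (w - u).isLt
  omega

lemma arc_subset_union {u v : Fin n} {a b : ℕ} (h : (u - v).val = a) :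
    arc v (a + b) ⊆ arc v a ∪ arc u b := by
  intro w
  simp only [mem_union, mem_arc]
  have := Fin.val_sub_eq_or w u
  have := Fin.val_sub_eq_or w v
  have := Fin.val_sub_eq_or u v
  have := (w - u).isLt
  have := (w - v).isLt
  omega

lemma disjoint_arc {u v : Fin n} {a b : ℕ} (h₁ : a ≤ (v - u).val) (h₂ : b ≤ (u - v).val) :
    Disjoint (arc u a) (arc v b) := by
  refine disjoint_left.mpr fun w => ?_
  simp only [mem_arc]
  have := Fin.val_sub_eq_or w u
  have := Fin.val_sub_eq_or w v
  have := Fin.val_sub_eq_or v u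
  have := Fin.val_sub_eq_or u v
  have := (w - u).isLt
  have := (w - v).isLt
  omega

lemma CSet_cycleGraph_of_sub_eq_one (hn : 5 ≤ n) {u x y : Fin n} (hxu : (x - u).val = 1)
    (hyx : (y - x).val = 1) : CSet (cycleGraph n) x y = arc u 4 := by
  have hxy : x ≠ y := by
    rintro rfl
    have := Fin.val_sub_eq_or x x
    omega
  ext w
  rw [mem_CSet_iff hxy, mem_arc]
  simp only [Fin.ext_iff, cycleGraph_adj_iff_val (show 2 ≤ n by omega)]
  have := Fin.val_sub_eq_or x u
  have := Fin.val_sub_eq_or y x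
  have := Fin.val_sub_eq_or w u
  have := x.isLt
  have := y.isLt
  have := w.isLt
  have := (w - u).isLt
  omega

lemma CSet_cycleGraph_of_sub_eq_two (hn : 5 ≤ n) {u x y : Fin n} (hxu : (x - u).val = 1)
    (hyx : (y - x).val = 2) : CSet (cycleGraph n) x y = arc u 2 ∪ arc y 2 := by
  have hxy : x ≠ y := by
    rintro rfl
    have := Fin.val_sub_eq_or x x
    omega
  ext w
  rw [mem_CSet_iff hxy, mem_union, mem_arc, mem_arc]
  simp only [Fin.ext_iff, cycleGraph_adj_iff_val (show 2 ≤ n by omega)]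
  have := Fin.val_sub_eq_or x u
  have := Fin.val_sub_eq_or y x
  have := Fin.val_sub_eq_or w u
  have := Fin.val_sub_eq_or w y
  have := x.isLt
  have := y.isLt
  have := w.isLt
  have := (w - u).isLt
  have := (w - y).isLt
  omega

lemma CSet_cycleGraph_of_three_le (hn : 5 ≤ n) {u v x y : Fin n} (hxu : (x - u).val = 1)
    (hyv : (y - v).val = 1) (hyx : 3 ≤ (y - x).val) (hxy : 3 ≤ (x - y).val) :
    CSet (cycleGraph n) x y = arc u 3 ∪ arc v 3 := by
  have hne : x ≠ y := by
    rintro rfl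
    have := Fin.val_sub_eq_or x x
    omega
  ext w
  rw [mem_CSet_iff hne, mem_union, mem_arc, mem_arc]
  simp only [Fin.ext_iff, cycleGraph_adj_iff_val (show 2 ≤ n by omega)]
  have := Fin.val_sub_eq_or x u
  have := Fin.val_sub_eq_or y v
  have := Fin.val_sub_eq_or y x
  have := Fin.val_sub_eq_or x y
  have := Fin.val_sub_eq_or w u
  have := Fin.val_sub_eq_or w v
  have := x.isLt
  have := y.isLt
  have := w.isLt
  have := (w - u).isLt
  have := (w - v).isLt
  omega

variable [NeZero n]

lemma card_arc (v : Fin n) {c : ℕ} (hc : c ≤ n) : #(arc v c) = c :=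
  calc #(arc v c) = #{d : Fin n | d.val < c} :=
        card_equiv (Equiv.subRight v) (by simp [mem_arc])
    _ = c := by rw [Fin.card_filter_val_lt, min_eq_right hc]

lemma sum_card_inter_arc (T : Finset (Fin n)) {c : ℕ} (hc : c ≤ n) :
    ∑ v, #(T ∩ arc v c) = c * #T := by
  simp_rw [← filter_mem_eq_inter, card_eq_sum_ones, sum_filter]
  rw [sum_comm, mul_sum, mul_one]
  refine sum_congr rfl fun t _ => ?_
  calc ∑ v, (if t ∈ arc v c then 1 else 0) = #{d : Fin n | d.val < c} := by
        rw [← card_filter]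
        exact card_equiv (Equiv.subLeft t) (by simp [mem_arc])
    _ = c := by rw [Fin.card_filter_val_lt, min_eq_right hc]

lemma mul_card_le_of_card_inter_arc_le {T : Finset (Fin n)} {c m : ℕ} (hc : c ≤ n)
    (h : ∀ v, #(T ∩ arc v c) ≤ m) : c * #T ≤ m * n := by
  rw [← sum_card_inter_arc T hc]
  simpa [mul_comm] using sum_le_sum fun v (_ : v ∈ univ) => h v

lemma card_inter_arc_add_le_two {T : Finset (Fin n)} {s : ℕ} (hs : s < n)
    (hT : ∀ v, #(T ∩ arc v s) ≤ 1) (v : Fin n) : #(T ∩ arc v (s + s)) ≤ 2 := by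
  obtain ⟨u, hu⟩ := Fin.exists_sub_val_eq v hs
  calc #(T ∩ arc v (s + s)) ≤ #(T ∩ (arc v s ∪ arc u s)) :=
        card_le_card (inter_subset_inter_left (arc_subset_union hu))
    _ ≤ 2 := (card_inter_union_le _ _ _).trans (add_le_add (hT v) (hT u))

lemma card_arc_two_union_arc_two (hn : 5 ≤ n) {u v : Fin n} (h : (v - u).val = 3) :
    #(arc u 2 ∪ arc v 2) = 4 := by
  have := Fin.val_sub_eq_or v u
  have := Fin.val_sub_eq_or u v
  rw [card_union_of_disjoint (disjoint_arc (by omega) (by omega)), card_arc _ (by omega),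
    card_arc _ (by omega)]

lemma isKAdjGen_cycleGraph_compl (hn : 5 ≤ n) {k : ℕ} {T : Finset (Fin n)}
    (h4 : ∀ v, k + #(T ∩ arc v 4) ≤ 4)
    (hgap : ∀ u v, (v - u).val = 3 → k + #(T ∩ (arc u 2 ∪ arc v 2)) ≤ 4)
    (h33 : ∀ u v, k + #(T ∩ arc u 3) + #(T ∩ arc v 3) ≤ 6) :
    IsKAdjGen (cycleGraph n) k Tᶜ := by
  have hpred : ∀ x : Fin n, (x - (x - 1)).val = 1 := fun x => by
    rw [sub_sub_cancel, Fin.val_one', Nat.mod_eq_of_lt (by omega)]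
  have near₁ : ∀ x y : Fin n, (y - x).val = 1 →
      k + #(T ∩ CSet (cycleGraph n) x y) ≤ #(CSet (cycleGraph n) x y) := by
    intro x y hyx
    rw [CSet_cycleGraph_of_sub_eq_one hn (hpred x) hyx, card_arc _ (by omega)]
    exact h4 _
  have near₂ : ∀ x y : Fin n, (y - x).val = 2 →
      k + #(T ∩ CSet (cycleGraph n) x y) ≤ #(CSet (cycleGraph n) x y) := by
    intro x y hyx
    have h3 : (y - (x - 1)).val = 3 := by
      have := Fin.val_sub_eq_or y (x - 1)
      have := Fin.val_sub_eq_or y x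
      have := Fin.val_sub_eq_or x (x - 1)
      have := hpred x
      have := (y - (x - 1)).isLt
      omega
    rw [CSet_cycleGraph_of_sub_eq_two hn (hpred x) hyx, card_arc_two_union_arc_two hn h3]
    exact hgap _ _ h3
  rw [isKAdjGen_compl_iff]
  intro x y hxy
  have := Fin.val_sub_eq_or x y
  have := Fin.val_sub_eq_or y x
  have := Fin.val_ne_of_ne hxy
  obtain hd | hd | hd | hd | ⟨hd, hd'⟩ : (y - x).val = 1 ∨ (x - y).val = 1 ∨
      (y - x).val = 2 ∨ (x - y).val = 2 ∨ (3 ≤ (y - x).val ∧ 3 ≤ (x - y).val) := by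
    omega
  · exact near₁ x y hd
  · rw [CSet_comm]
    exact near₁ y x hd
  · exact near₂ x y hd
  · rw [CSet_comm]
    exact near₂ y x hd
  · have := Fin.val_sub_eq_or (y - 1) (x - 1)
    have := Fin.val_sub_eq_or (x - 1) (y - 1)
    have := Fin.val_sub_eq_or x (x - 1)
    have := Fin.val_sub_eq_or y (y - 1)
    have := hpred x
    have := hpred y
    have hdisj : Disjoint (arc (x - 1) 3) (arc (y - 1) 3) := disjoint_arc (by omega) (by omega)
    rw [CSet_cycleGraph_of_three_le hn (hpred x) (hpred y) hd hd', card_union_of_disjoint hdisj,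
      card_arc _ (by omega), card_arc _ (by omega)]
    have := card_inter_union_le T (arc (x - 1) 3) (arc (y - 1) 3)
    have := h33 (x - 1) (y - 1)
    omega

section LowerBound
variable {k : ℕ} {S : Finset (Fin n)} (hn : 5 ≤ n) (hS : IsKAdjGen (cycleGraph n) k S)
include hn hS

lemma IsKAdjGen.add_card_compl_inter_arc_four_le (v : Fin n) : k + #(Sᶜ ∩ arc v 4) ≤ 4 := by
  obtain ⟨x, hx⟩ := Fin.exists_sub_val_eq v (a := 1) (by omega)
  obtain ⟨y, hy⟩ := Fin.exists_sub_val_eq x (a := 1) (by omega)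
  have hxy : x ≠ y := by rintro rfl; simp at hy
  have := hS.add_card_compl_inter_CSet_le hxy
  rwa [CSet_cycleGraph_of_sub_eq_one hn hx hy, card_arc _ (by omega)] at this

lemma IsKAdjGen.add_card_compl_inter_gap_le {u v : Fin n} (h : (v - u).val = 3) :
    k + #(Sᶜ ∩ (arc u 2 ∪ arc v 2)) ≤ 4 := by
  obtain ⟨x, hx⟩ := Fin.exists_sub_val_eq u (a := 1) (by omega)
  have hvx : (v - x).val = 2 := by
    have := Fin.val_sub_eq_or v x
    have := Fin.val_sub_eq_or v u
    have := Fin.val_sub_eq_or x u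
    have := (v - x).isLt
    omega
  have hxv : x ≠ v := by rintro rfl; simp at hvx
  have := hS.add_card_compl_inter_CSet_le hxv
  rwa [CSet_cycleGraph_of_sub_eq_two hn hx hvx, card_arc_two_union_arc_two hn h] at this

lemma IsKAdjGen.four_mul_card_compl_le : 4 * #Sᶜ ≤ (4 - k) * n :=
  mul_card_le_of_card_inter_arc_le (by omega) fun v => by
    have := hS.add_card_compl_inter_arc_four_le hn v
    omega

end LowerBound

/- A window `v, …, v + 4` holding two points `a ≠ b` of `Sᶜ` would put both in the window of
four starting at `v` or at `v + 1`, or else `{a, b} = {v, v + 4} ⊆ C(v + 1, v + 3)`. -/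
lemma IsKAdjGen.card_compl_inter_arc_five_le_one (hn : 5 ≤ n) {S : Finset (Fin n)}
    (hS : IsKAdjGen (cycleGraph n) 3 S) (v : Fin n) : #(Sᶜ ∩ arc v 5) ≤ 1 := by
  obtain ⟨v₁, hv₁⟩ := Fin.exists_sub_val_eq v (a := 1) (by omega)
  obtain ⟨v₃, hv₃⟩ := Fin.exists_sub_val_eq v (a := 3) (by omega)
  refine card_le_one.mpr fun a ha b hb => by_contra fun hab => ?_
  rw [mem_inter, mem_arc] at ha hb
  have two_le : ∀ A : Finset (Fin n), a ∈ A → b ∈ A → 2 ≤ #(Sᶜ ∩ A) :=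
    fun A haA hbA =>
      one_lt_card.mpr ⟨a, mem_inter.mpr ⟨ha.1, haA⟩, b, mem_inter.mpr ⟨hb.1, hbA⟩, hab⟩
  have := Fin.val_sub_eq_or a v
  have := Fin.val_sub_eq_or b v
  have := Fin.val_sub_eq_or a v₁
  have := Fin.val_sub_eq_or b v₁
  have := Fin.val_sub_eq_or a v₃
  have := Fin.val_sub_eq_or b v₃
  have := Fin.val_sub_eq_or v₁ v
  have := Fin.val_sub_eq_or v₃ v
  have := Fin.val_ne_of_ne hab
  have := (a - v₁).isLt
  have := (b - v₁).isLt
  have := (a - v₃).isLt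
  have := (b - v₃).isLt
  by_cases h03 : (a - v).val ≤ 3 ∧ (b - v).val ≤ 3
  · have := two_le (arc v 4) (mem_arc.mpr (by omega)) (mem_arc.mpr (by omega))
    have := hS.add_card_compl_inter_arc_four_le hn v
    omega
  by_cases h14 : 1 ≤ (a - v).val ∧ 1 ≤ (b - v).val
  · have := two_le (arc v₁ 4) (mem_arc.mpr (by omega)) (mem_arc.mpr (by omega))
    have := hS.add_card_compl_inter_arc_four_le hn v₁
    omega
  · have := two_le (arc v 2 ∪ arc v₃ 2) (by simp only [mem_union, mem_arc]; omega)
      (by simp only [mem_union, mem_arc]; omega)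
    have := hS.add_card_compl_inter_gap_le hn hv₃
    omega

lemma IsKAdjGen.five_mul_card_compl_le (hn : 5 ≤ n) {S : Finset (Fin n)}
    (hS : IsKAdjGen (cycleGraph n) 3 S) : 5 * #Sᶜ ≤ n := by
  simpa using
    mul_card_le_of_card_inter_arc_le (by omega) (hS.card_compl_inter_arc_five_le_one hn)

/-- Cyclically consecutive elements, the last one and `0` included, are at distance `≥ s`. -/
def multiplesOf (s : ℕ) : Finset (Fin n) := (range (n / s)).image fun i => Fin.ofNat n (s * i)

lemma card_multiplesOf {s : ℕ} (hs : 0 < s) : #(multiplesOf (n := n) s) = n / s := by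
  refine (card_image_of_injOn fun i hi j hj hij => ?_).trans (card_range _)
  have := Nat.mul_add_le_of_lt_div (mem_range.mp hi)
  have := Nat.mul_add_le_of_lt_div (mem_range.mp hj)
  have := congrArg Fin.val hij
  simp only [Fin.val_ofNat, Nat.mod_eq_of_lt (show s * i < n by omega),
    Nat.mod_eq_of_lt (show s * j < n by omega)] at this
  exact Nat.eq_of_mul_eq_mul_left hs this

lemma card_multiplesOf_inter_arc_le_one {s : ℕ} (v : Fin n) :
    #(multiplesOf s ∩ arc v s) ≤ 1 := by
  suffices key : ∀ i j, i < j → j < n / s → (Fin.ofNat n (s * i) - v).val < s →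
      s ≤ (Fin.ofNat n (s * j) - v).val by
    refine card_le_one.mpr fun a ha b hb => ?_
    simp only [mem_inter, multiplesOf, mem_image, mem_range, mem_arc] at ha hb
    obtain ⟨⟨i, hi, rfl⟩, ha⟩ := ha
    obtain ⟨⟨j, hj, rfl⟩, hb⟩ := hb
    rcases lt_trichotomy i j with h | rfl | h
    · exact absurd hb (not_lt.mpr (key i j h hj ha))
    · rfl
    · exact absurd ha (not_lt.mpr (key j i h hi hb))
  intro i j hij hj ha
  have := Nat.mul_add_le_of_lt_div (hij.trans hj)
  have := Nat.mul_add_le_of_lt_div hj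
  have : s * i + s ≤ s * j := by nlinarith
  have : (Fin.ofNat n (s * i)).val = s * i := Nat.mod_eq_of_lt (by omega)
  have : (Fin.ofNat n (s * j)).val = s * j := Nat.mod_eq_of_lt (by omega)
  have := Fin.val_sub_eq_or (Fin.ofNat n (s * i)) v
  have := Fin.val_sub_eq_or (Fin.ofNat n (s * j)) v
  omega

lemma isKAdjGen_two_compl_multiplesOf_two (hn : 5 ≤ n) :
    IsKAdjGen (cycleGraph n) 2 (multiplesOf 2)ᶜ := by
  have h4 : ∀ v : Fin n, #(multiplesOf 2 ∩ arc v 4) ≤ 2 :=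
    card_inter_arc_add_le_two (by omega) card_multiplesOf_inter_arc_le_one
  refine isKAdjGen_cycleGraph_compl hn (fun v => by have := h4 v; omega) (fun u v _ => ?_)
    (fun u v => ?_)
  · have := card_inter_union_le (multiplesOf 2) (arc u 2) (arc v 2)
    have := card_multiplesOf_inter_arc_le_one (n := n) (s := 2) u
    have := card_multiplesOf_inter_arc_le_one (n := n) (s := 2) v
    omega
  · have h3 : ∀ w : Fin n, #(multiplesOf 2 ∩ arc w 3) ≤ 2 := fun w =>
      (card_le_card (inter_subset_inter_left (arc_mono w (by omega : 3 ≤ 4)))).trans (h4 w)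
    have := h3 u
    have := h3 v
    omega

lemma isKAdjGen_three_compl_multiplesOf_five (hn : 5 ≤ n) :
    IsKAdjGen (cycleGraph n) 3 (multiplesOf 5)ᶜ := by
  have h5 : ∀ {A : Finset (Fin n)} (u : Fin n), A ⊆ arc u 5 → #(multiplesOf 5 ∩ A) ≤ 1 :=
    fun u hA => (card_le_card (inter_subset_inter_left hA)).trans
      (card_multiplesOf_inter_arc_le_one u)
  refine isKAdjGen_cycleGraph_compl hn (fun v => ?_) (fun u v huv => ?_) (fun u v => ?_)
  · have := h5 v (arc_mono v (by omega : 4 ≤ 5))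
    omega
  · have := h5 u <|
      union_subset (arc_mono u (by omega : 2 ≤ 5)) (arc_subset_arc (v := v) (b := 2) (by omega))
    omega
  · have := h5 u (arc_mono u (by omega : 3 ≤ 5))
    have := h5 v (arc_mono v (by omega : 3 ≤ 5))
    omega

lemma isKAdjGen_four_univ (hn : 5 ≤ n) :
    IsKAdjGen (cycleGraph n) 4 (univ : Finset (Fin n)) := by
  simpa using isKAdjGen_cycleGraph_compl hn (T := ∅) (by simp) (by simp) (by simp)

end Cycle

/-- Proposition 4.11: for `n ≥ 5`, `adim_2(C_n) = ⌈n/2⌉`,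
`adim_3(C_n) = n - ⌊n/5⌋` and `adim_4(C_n) = n`. -/
theorem adim_cycleGraph (n : ℕ) (h : 5 ≤ n) :
    adim (SimpleGraph.cycleGraph n) 2 = (n + 1) / 2 ∧
      adim (SimpleGraph.cycleGraph n) 3 = n - n / 5 ∧
      adim (SimpleGraph.cycleGraph n) 4 = n := by
  have : NeZero n := ⟨by omega⟩
  have hcompl : ∀ S : Finset (Fin n), #S + #Sᶜ = n := fun S => by
    rw [card_add_card_compl, Fintype.card_fin]
  have h2 : #(multiplesOf (n := n) 2)ᶜ = n - n / 2 := by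
    rw [card_compl, Fintype.card_fin, card_multiplesOf (by norm_num)]
  have h5 : #(multiplesOf (n := n) 5)ᶜ = n - n / 5 := by
    rw [card_compl, Fintype.card_fin, card_multiplesOf (by norm_num)]
  refine ⟨?_, ?_, ?_⟩
  · rw [adim_eq_of_isKAdjGen _ (isKAdjGen_two_compl_multiplesOf_two h) fun S hS => ?_, h2]
    · omega
    · have := hS.four_mul_card_compl_le h
      have := hcompl S
      omega
  · rw [adim_eq_of_isKAdjGen _ (isKAdjGen_three_compl_multiplesOf_five h) fun S hS => ?_, h5]
    have := hS.five_mul_card_compl_le h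
    have := hcompl S
    omega
  · rw [adim_eq_of_isKAdjGen _ (isKAdjGen_four_univ h) fun S hS => ?_, card_univ,
      Fintype.card_fin]
    have := hS.four_mul_card_compl_le h
    have := hcompl S
    simp only [card_univ, Fintype.card_fin]
    omega

end
end AdjDim
end
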